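/- arXiv:1012.4116 — 4 statements merged into one kernel-verified Lean document; each statement's English description precedes it below -/
import Mathlib

section
/- For any vector x in R^D and any two d-dimensional linear subspaces L1, L2 of R^D, the distances from x to L1 and to L2 differ by at most the norm of x times the geodesic Grassmannian distance between L1 and L2, where the geodesic distance is the square root of the sum of squares of the principal angles between L1 and L2. -/
open Matrix

/-- The singular values of a real matrix `A`, defined as the square roots of the
eigenvalues of `Aᴴ * A` (in some order). -/
noncomputable def svals {m n : ℕ} (A : Matrix (Fin m) (Fin n) ℝ) : Fin n → ℝ :=
  fun i => Real.sqrt ((Matrix.isHermitian_conjTranspose_mul_self A).eigenvalues i)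

/-- The principal angles between two `d`-subspaces spanned by the (orthonormal) columns of
`Q1` and `Q2`, defined via `θ i = arccos (σ_i (Q2ᵀ * Q1))`. -/
noncomputable def principalAngles {D d : ℕ} (Q1 Q2 : Matrix (Fin D) (Fin d) ℝ) : Fin d → ℝ :=
  fun i => Real.arccos (svals (Q2ᵀ * Q1) i)

/-!
Write `Lᵢ` for the column span of `Qᵢ` and `θ` for the principal angles. If `p` is the
orthogonal projection of `x` onto `L₂`, then `dist(x, L₁) ≤ dist(x, L₂) + dist(p, L₁)` and
`‖p‖ ≤ ‖x‖`, so it suffices to show `dist(p, L₁) ≤ ‖p‖ √(∑ θᵢ²)` for `p = Q₂ c ∈ L₂`.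
Projecting `p` onto `L₁` gives `dist(p, L₁)² ≤ ‖c‖² - ‖Q₁ᵀ Q₂ c‖²`, the Rayleigh bound gives
`‖Q₁ᵀ Q₂ c‖² ≥ (minᵢ cos² θᵢ) ‖c‖²`, and `1 - cos² θ = sin² θ ≤ θ²`. The other direction is
symmetric: `Mᵀ M` and `M Mᵀ` have the same characteristic polynomial for square `M`, so the
principal angles do not depend on the order of the two subspaces.
-/

theorem EuclideanSpace.real_norm_toLp_sq {m : Type*} [Fintype m] (v : m → ℝ) :
    ‖(WithLp.toLp 2 v : EuclideanSpace ℝ m)‖ ^ 2 = v ⬝ᵥ v := by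
  rw [EuclideanSpace.real_norm_sq_eq]
  simp only [dotProduct, sq]

namespace Matrix

variable {m n : Type*} [Fintype n]

theorem dotProduct_mulVec_mulVec_of_transpose_mul_self [Fintype m] [DecidableEq n]
    {Q : Matrix m n ℝ} (hQ : Qᵀ * Q = 1) (a b : n → ℝ) : (Q *ᵥ a) ⬝ᵥ (Q *ᵥ b) = a ⬝ᵥ b := by
  rw [dotProduct_mulVec, ← mulVec_transpose, mulVec_mulVec, hQ, one_mulVec]

theorem dotProduct_conjTranspose_mul_self_mulVec [Fintype m] (M : Matrix m n ℝ) (c : n → ℝ) :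
    c ⬝ᵥ ((Mᴴ * M) *ᵥ c) = (M *ᵥ c) ⬝ᵥ (M *ᵥ c) := by
  rw [conjTranspose_eq_transpose_of_trivial, ← mulVec_mulVec, dotProduct_mulVec,
    ← mulVec_transpose, dotProduct_comm, transpose_transpose]

open scoped MatrixOrder in
theorem IsHermitian.mul_dotProduct_self_le_dotProduct_mulVec [DecidableEq n]
    {A : Matrix n n ℝ} (hA : A.IsHermitian) {μ : ℝ} (hμ : ∀ i, μ ≤ hA.eigenvalues i)
    (c : n → ℝ) : μ * (c ⬝ᵥ c) ≤ c ⬝ᵥ (A *ᵥ c) := by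
  have hle : algebraMap ℝ _ μ ≤ A := by
    rw [algebraMap_le_iff_le_spectrum hA.isSelfAdjoint, hA.spectrum_real_eq_range_eigenvalues]
    rintro _ ⟨i, rfl⟩
    exact hμ i
  simpa only [star_trivial, Algebra.algebraMap_eq_smul_one, sub_mulVec, smul_mulVec, one_mulVec,
    dotProduct_sub, dotProduct_smul, smul_eq_mul, sub_nonneg] using
    (le_iff.mp hle).dotProduct_mulVec_nonneg c

theorem eigenvalues_conjTranspose_mul_self_conjTranspose [DecidableEq n] (M : Matrix n n ℝ) :
    (isHermitian_conjTranspose_mul_self Mᴴ).eigenvalues =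
      (isHermitian_conjTranspose_mul_self M).eigenvalues := by
  rw [IsHermitian.eigenvalues_eq_eigenvalues_iff, conjTranspose_conjTranspose, charpoly_mul_comm]

noncomputable def colSpan (Q : Matrix m n ℝ) : Submodule ℝ (EuclideanSpace ℝ m) :=
  Submodule.span ℝ (Set.range fun j => (WithLp.toLp 2 (fun i => Q i j) : EuclideanSpace ℝ m))

theorem mem_colSpan_iff {Q : Matrix m n ℝ} {p : EuclideanSpace ℝ m} :
    p ∈ Q.colSpan ↔ ∃ c, WithLp.toLp 2 (Q *ᵥ c) = p := by
  have hsum : ∀ c : n → ℝ, ∑ j, c j • (WithLp.toLp 2 (fun i => Q i j) : EuclideanSpace ℝ m) =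
      WithLp.toLp 2 (Q *ᵥ c) := by
    intro c
    ext i
    simp [mulVec, dotProduct, mul_comm]
  simp only [colSpan, Submodule.mem_span_range_iff_exists_fun, hsum]

theorem infDist_toLp_colSpan_sq_le [Fintype m] [DecidableEq n] {Q : Matrix m n ℝ}
    (hQ : Qᵀ * Q = 1) (v : m → ℝ) :
    Metric.infDist (WithLp.toLp 2 v) Q.colSpan ^ 2 ≤ v ⬝ᵥ v - (Qᵀ *ᵥ v) ⬝ᵥ (Qᵀ *ᵥ v) := by
  set w := Qᵀ *ᵥ v
  have hmem : WithLp.toLp 2 (Q *ᵥ w) ∈ Q.colSpan := mem_colSpan_iff.mpr ⟨w, rfl⟩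
  have hcross : v ⬝ᵥ (Q *ᵥ w) = w ⬝ᵥ w := by rw [dotProduct_mulVec, ← mulVec_transpose]
  calc Metric.infDist (WithLp.toLp 2 v) Q.colSpan ^ 2
      ≤ dist (WithLp.toLp 2 v) (WithLp.toLp 2 (Q *ᵥ w) : EuclideanSpace ℝ m) ^ 2 := by
        gcongr
        · exact Metric.infDist_nonneg
        · exact Metric.infDist_le_dist_of_mem hmem
    _ = (v - Q *ᵥ w) ⬝ᵥ (v - Q *ᵥ w) := by
        rw [dist_eq_norm, ← WithLp.toLp_sub, EuclideanSpace.real_norm_toLp_sq]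
    _ = v ⬝ᵥ v - w ⬝ᵥ w := by
        rw [sub_dotProduct, dotProduct_sub, dotProduct_sub, dotProduct_comm (Q *ᵥ w) v, hcross,
          dotProduct_mulVec_mulVec_of_transpose_mul_self hQ]
        ring

end Matrix

theorem Real.one_sub_sq_le_arccos_sq (x : ℝ) : 1 - x ^ 2 ≤ Real.arccos x ^ 2 := by
  rcases le_or_gt 0 (1 - x ^ 2) with h | h
  · have hθ := Real.arccos_nonneg x
    calc 1 - x ^ 2 = Real.sin (Real.arccos x) ^ 2 := by rw [Real.sin_arccos, Real.sq_sqrt h]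
      _ ≤ Real.arccos x ^ 2 := by
        gcongr
        · exact Real.sin_nonneg_of_nonneg_of_le_pi hθ (Real.arccos_le_pi x)
        · exact Real.sin_le hθ
  · exact h.le.trans (sq_nonneg _)

theorem Submodule.infDist_sub_infDist_le {𝕜 E : Type*} [RCLike 𝕜] [NormedAddCommGroup E]
    [InnerProductSpace 𝕜 E] (K₁ K₂ : Submodule 𝕜 E) [K₂.HasOrthogonalProjection] {s : ℝ}
    (hs : 0 ≤ s) (h : ∀ p ∈ K₂, Metric.infDist p K₁ ≤ ‖p‖ * s) (x : E) :
    Metric.infDist x K₁ - Metric.infDist x K₂ ≤ ‖x‖ * s := by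
  set p := K₂.starProjection x
  have hdist : Metric.infDist x K₂ = dist x p := by
    rw [Metric.infDist_eq_iInf, dist_eq_norm, Submodule.starProjection_minimal]
    simp only [dist_eq_norm]
    rfl
  have hp : Metric.infDist p K₁ ≤ ‖x‖ * s :=
    (h p (K₂.starProjection_apply_mem x)).trans
      (mul_le_mul_of_nonneg_right (K₂.norm_starProjection_apply_le x) hs)
  linarith [Metric.infDist_le_infDist_add_dist (x := x) (y := p) (s := (K₁ : Set E))]

section PrincipalAngles

variable {D d : ℕ}

theorem svals_conjTranspose (M : Matrix (Fin d) (Fin d) ℝ) : svals Mᴴ = svals M := by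
  unfold svals
  rw [eigenvalues_conjTranspose_mul_self_conjTranspose]

theorem principalAngles_comm (Q1 Q2 : Matrix (Fin D) (Fin d) ℝ) :
    principalAngles Q1 Q2 = principalAngles Q2 Q1 := by
  have h : Q1ᵀ * Q2 = (Q2ᵀ * Q1)ᴴ := by
    rw [conjTranspose_eq_transpose_of_trivial, transpose_mul, transpose_transpose]
  unfold principalAngles
  rw [h, svals_conjTranspose]

theorem one_sub_sum_sq_principalAngles_le_eigenvalues (Q1 Q2 : Matrix (Fin D) (Fin d) ℝ)
    (i : Fin d) :
    1 - ∑ j, principalAngles Q1 Q2 j ^ 2 ≤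
      (isHermitian_conjTranspose_mul_self (Q2ᵀ * Q1)).eigenvalues i := by
  calc 1 - ∑ j, principalAngles Q1 Q2 j ^ 2 ≤ 1 - principalAngles Q1 Q2 i ^ 2 := by
        gcongr
        exact Finset.single_le_sum (fun j _ => sq_nonneg (principalAngles Q1 Q2 j))
          (Finset.mem_univ i)
    _ ≤ svals (Q2ᵀ * Q1) i ^ 2 := by
        show 1 - Real.arccos (svals (Q2ᵀ * Q1) i) ^ 2 ≤ _
        linarith [Real.one_sub_sq_le_arccos_sq (svals (Q2ᵀ * Q1) i)]
    _ = (isHermitian_conjTranspose_mul_self (Q2ᵀ * Q1)).eigenvalues i :=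
        Real.sq_sqrt (eigenvalues_conjTranspose_mul_self_nonneg _ i)

theorem one_sub_sum_sq_principalAngles_mul_le (Q1 Q2 : Matrix (Fin D) (Fin d) ℝ)
    (c : Fin d → ℝ) :
    (1 - ∑ j, principalAngles Q1 Q2 j ^ 2) * (c ⬝ᵥ c) ≤
      ((Q2ᵀ * Q1) *ᵥ c) ⬝ᵥ ((Q2ᵀ * Q1) *ᵥ c) := by
  rw [← dotProduct_conjTranspose_mul_self_mulVec]
  exact (isHermitian_conjTranspose_mul_self _).mul_dotProduct_self_le_dotProduct_mulVec
    (one_sub_sum_sq_principalAngles_le_eigenvalues Q1 Q2) c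

theorem infDist_colSpan_le_of_mem_colSpan {Q1 Q2 : Matrix (Fin D) (Fin d) ℝ}
    (hQ1 : Q1ᵀ * Q1 = 1) (hQ2 : Q2ᵀ * Q2 = 1) {p : EuclideanSpace ℝ (Fin D)}
    (hp : p ∈ Q2.colSpan) :
    Metric.infDist p Q1.colSpan ≤ ‖p‖ * √(∑ i, principalAngles Q2 Q1 i ^ 2) := by
  obtain ⟨c, rfl⟩ := mem_colSpan_iff.mp hp
  have hS : 0 ≤ ∑ i, principalAngles Q2 Q1 i ^ 2 := Finset.sum_nonneg fun i _ => sq_nonneg _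
  have hc : (Q2 *ᵥ c) ⬝ᵥ (Q2 *ᵥ c) = c ⬝ᵥ c :=
    dotProduct_mulVec_mulVec_of_transpose_mul_self hQ2 c c
  have hdist := infDist_toLp_colSpan_sq_le hQ1 (Q2 *ᵥ c)
  rw [mulVec_mulVec, hc] at hdist
  rw [← pow_le_pow_iff_left₀ Metric.infDist_nonneg (by positivity) two_ne_zero, mul_pow,
    Real.sq_sqrt hS, EuclideanSpace.real_norm_toLp_sq, hc]
  linarith [one_sub_sum_sq_principalAngles_mul_le Q2 Q1 c]

end PrincipalAngles

theorem stmt0 (D d : ℕ)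
    (Q1 Q2 : Matrix (Fin D) (Fin d) ℝ)
    (hQ1 : Q1ᵀ * Q1 = 1) (hQ2 : Q2ᵀ * Q2 = 1)
    (L1 L2 : Submodule ℝ (EuclideanSpace ℝ (Fin D)))
    (hL1 : L1 = Submodule.span ℝ
      (Set.range fun j : Fin d => (WithLp.toLp 2 (fun i => Q1 i j) : EuclideanSpace ℝ (Fin D))))
    (hL2 : L2 = Submodule.span ℝ
      (Set.range fun j : Fin d => (WithLp.toLp 2 (fun i => Q2 i j) : EuclideanSpace ℝ (Fin D))))
    (x : EuclideanSpace ℝ (Fin D)) :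
    |Metric.infDist x (L1 : Set (EuclideanSpace ℝ (Fin D))) -
        Metric.infDist x (L2 : Set (EuclideanSpace ℝ (Fin D)))| ≤
      ‖x‖ * Real.sqrt (∑ i, principalAngles Q1 Q2 i ^ 2) := by
  change L1 = Q1.colSpan at hL1
  change L2 = Q2.colSpan at hL2
  subst hL1 hL2
  have hs : 0 ≤ √(∑ i, principalAngles Q1 Q2 i ^ 2) := Real.sqrt_nonneg _
  rw [abs_sub_le_iff]
  constructor
  · refine Submodule.infDist_sub_infDist_le _ _ hs (fun p hp => ?_) x
    rw [principalAngles_comm]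
    exact infDist_colSpan_le_of_mem_colSpan hQ1 hQ2 hp
  · exact Submodule.infDist_sub_infDist_le _ _ hs
      (fun p hp => infDist_colSpan_le_of_mem_colSpan hQ2 hQ1 hp) x
end

section
/- Let p > 1 and let x, y be vectors in the closed unit ball of R^D. If 1 < p ≤ 2 then ‖ ‖x‖^{p−2} x − ‖y‖^{p−2} y ‖ ≤ 2^{3−p} ‖x − y‖^{p−1}, and if p > 2 then ‖ ‖x‖^{p−2} x − ‖y‖^{p−2} y ‖ ≤ (p−1) ‖x − y‖. -/
/-!
Write `a = ‖x‖ ≥ b = ‖y‖` and `t = ‖x - y‖`, and split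
`a^(p-2) • x - b^(p-2) • y = a^(p-2) • (x - y) + (a^(p-2) - b^(p-2)) • y`.

For `p ≤ 2` the power `s ↦ s^(p-2)` is antitone, so `a^(p-2) c ≤ c^(p-1)` whenever `c ≤ a`.
With `c = t/2` (as `t ≤ 2a`) this bounds the first term, and with `c = a - b ≤ t`
it bounds the second, since `b^(p-1) - a^(p-2) b ≤ a^(p-2) (a - b)`.

For `p > 2` we have `a^(p-2) ≤ 1`, and weighted AM-GM gives
`(a^q - b^q) b ≤ q a^q (a - b) ≤ q t` for `q = p - 2`.
-/

open Real

lemma norm_smul_sub_smul_le {E : Type*} [SeminormedAddCommGroup E] [NormedSpace ℝ E]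
    {c : ℝ} (hc : 0 ≤ c) (d : ℝ) (x y : E) :
    ‖c • x - d • y‖ ≤ c * ‖x - y‖ + |c - d| * ‖y‖ := by
  calc ‖c • x - d • y‖ = ‖c • (x - y) + (c - d) • y‖ := by congr 1; module
    _ ≤ c * ‖x - y‖ + |c - d| * ‖y‖ := by
      grw [norm_add_le, norm_smul, norm_smul, Real.norm_eq_abs, Real.norm_eq_abs, abs_of_nonneg hc]

namespace Real

lemma rpow_mul_le_rpow_add_one {r a c : ℝ} (hr : r ≤ 0) (hc : 0 ≤ c) (hca : c ≤ a) :
    a ^ r * c ≤ c ^ (r + 1) := by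
  rcases hc.eq_or_lt with rfl | hc
  · simpa using rpow_nonneg le_rfl (r + 1)
  · rw [rpow_add_one hc.ne']
    exact mul_le_mul_of_nonneg_right (rpow_le_rpow_of_nonpos hc hca hr) hc.le

lemma rpow_sub_rpow_mul_le {q a b : ℝ} (hq : 0 ≤ q) (ha : 0 ≤ a) (hb : 0 ≤ b) :
    (a ^ q - b ^ q) * b ≤ q * a ^ q * (a - b) := by
  have hq1 : 0 < q + 1 := by linarith
  have amgm := geom_mean_le_arith_mean2_weighted (div_nonneg hq hq1.le) (one_div_nonneg.2 hq1.le)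
    (rpow_nonneg ha (q + 1)) (rpow_nonneg hb (q + 1)) (by field_simp)
  rw [← rpow_mul ha, ← rpow_mul hb, mul_div_cancel₀ _ hq1.ne', mul_one_div_cancel hq1.ne',
    rpow_one, rpow_add_one' ha hq1.ne', rpow_add_one' hb hq1.ne'] at amgm
  have := mul_le_mul_of_nonneg_left amgm hq1.le
  field_simp at this
  linarith

lemma abs_rpow_sub_rpow_mul_le {r a b : ℝ} (hr : r ≤ 0) (hr1 : -1 ≤ r) (hb : 0 ≤ b) (hba : b ≤ a) :
    |a ^ r - b ^ r| * b ≤ (a - b) ^ (r + 1) := by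
  rcases hb.eq_or_lt with rfl | hb
  · simpa using rpow_nonneg (sub_nonneg.2 hba) (r + 1)
  have ha : 0 < a := hb.trans_le hba
  rw [abs_sub_comm, abs_of_nonneg (sub_nonneg.2 (rpow_le_rpow_of_nonpos hb hba hr))]
  calc (b ^ r - a ^ r) * b = b ^ (r + 1) - a ^ r * b := by rw [rpow_add_one hb.ne']; ring
    _ ≤ a ^ (r + 1) - a ^ r * b := by gcongr; linarith
    _ = a ^ r * (a - b) := by rw [rpow_add_one ha.ne']; ring
    _ ≤ (a - b) ^ (r + 1) := rpow_mul_le_rpow_add_one hr (sub_nonneg.2 hba) (by linarith)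

end Real

section

variable {E : Type*} [NormedAddCommGroup E] [NormedSpace ℝ E]

lemma norm_rpow_smul_sub_rpow_smul_le_of_le_two {p : ℝ} (hp : 1 < p) (hp2 : p ≤ 2) (x y : E) :
    ‖(‖x‖ ^ (p - 2)) • x - (‖y‖ ^ (p - 2)) • y‖ ≤
      (2 : ℝ) ^ (3 - p) * ‖x - y‖ ^ (p - 1) := by
  wlog hyx : ‖y‖ ≤ ‖x‖ generalizing x y
  · simpa only [norm_sub_rev] using this y x (le_of_not_ge hyx)
  set a := ‖x‖
  set b := ‖y‖
  set t := ‖x - y‖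
  have hexp : p - 2 + 1 = p - 1 := by ring
  have hb : 0 ≤ b := norm_nonneg y
  have ht : 0 ≤ t := norm_nonneg (x - y)
  have hab : a - b ≤ t := norm_sub_norm_le x y
  have hta : t / 2 ≤ a := by linarith [norm_sub_le x y]
  have first : a ^ (p - 2) * t ≤ 2 * (t / 2) ^ (p - 1) := by
    have := rpow_mul_le_rpow_add_one (r := p - 2) (by linarith) (by positivity) hta
    rw [hexp] at this
    linarith
  have second : |a ^ (p - 2) - b ^ (p - 2)| * b ≤ t ^ (p - 1) := by
    grw [abs_rpow_sub_rpow_mul_le (by linarith) (by linarith) hb hyx, hexp, hab]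
    all_goals linarith
  have scale : t ^ (p - 1) = 2 ^ (p - 1) * (t / 2) ^ (p - 1) := by
    rw [← mul_rpow (by norm_num) (by positivity)]; ring_nf
  have two_pow : (2 : ℝ) ^ (3 - p) * 2 ^ (p - 1) = 4 := by
    rw [← rpow_add (by norm_num)]; norm_num
  have two_pow_le : (2 : ℝ) ^ (p - 1) ≤ 2 := by
    simpa using rpow_le_rpow_of_exponent_le (one_le_two : (1 : ℝ) ≤ 2) (by linarith : p - 1 ≤ 1)
  have half_pow_nonneg := rpow_nonneg (by positivity : 0 ≤ t / 2) (p - 1)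
  calc _ ≤ a ^ (p - 2) * t + |a ^ (p - 2) - b ^ (p - 2)| * b :=
        norm_smul_sub_smul_le (rpow_nonneg (norm_nonneg x) _) _ x y
    _ ≤ 2 * (t / 2) ^ (p - 1) + 2 ^ (p - 1) * (t / 2) ^ (p - 1) := by linarith
    _ ≤ 4 * (t / 2) ^ (p - 1) := by linarith [mul_le_mul_of_nonneg_right two_pow_le half_pow_nonneg]
    _ = 2 ^ (3 - p) * t ^ (p - 1) := by rw [scale, ← mul_assoc, two_pow]

lemma norm_rpow_smul_sub_rpow_smul_le_of_two_lt {p : ℝ} (hp2 : 2 < p) {x y : E}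
    (hx : ‖x‖ ≤ 1) (hy : ‖y‖ ≤ 1) :
    ‖(‖x‖ ^ (p - 2)) • x - (‖y‖ ^ (p - 2)) • y‖ ≤ (p - 1) * ‖x - y‖ := by
  wlog hyx : ‖y‖ ≤ ‖x‖ generalizing x y
  · simpa only [norm_sub_rev] using this hy hx (le_of_not_ge hyx)
  set a := ‖x‖
  set b := ‖y‖
  set t := ‖x - y‖
  have hb : 0 ≤ b := norm_nonneg y
  have ht : 0 ≤ t := norm_nonneg (x - y)
  have hab : a - b ≤ t := norm_sub_norm_le x y
  have ha1 : a ^ (p - 2) ≤ 1 := rpow_le_one (norm_nonneg x) hx (by linarith)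
  have hba : b ^ (p - 2) ≤ a ^ (p - 2) := rpow_le_rpow hb hyx (by linarith)
  calc _ ≤ a ^ (p - 2) * t + |a ^ (p - 2) - b ^ (p - 2)| * b :=
        norm_smul_sub_smul_le (rpow_nonneg (norm_nonneg x) _) _ x y
    _ ≤ t + (p - 2) * a ^ (p - 2) * (a - b) := by
        rw [abs_of_nonneg (sub_nonneg.2 hba)]
        linarith [mul_le_of_le_one_left ht ha1,
          rpow_sub_rpow_mul_le (by linarith : 0 ≤ p - 2) (norm_nonneg x) hb]
    _ ≤ t + (p - 2) * 1 * t := by gcongr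
    _ = (p - 1) * t := by ring

end

theorem stmt6 (D : ℕ) (p : ℝ) (hp : 1 < p)
    (x y : EuclideanSpace ℝ (Fin D)) (hx : ‖x‖ ≤ 1) (hy : ‖y‖ ≤ 1) :
    (p ≤ 2 →
      ‖(‖x‖ ^ (p - 2)) • x - (‖y‖ ^ (p - 2)) • y‖ ≤
        (2 : ℝ) ^ (3 - p) * ‖x - y‖ ^ (p - 1)) ∧
    (2 < p →
      ‖(‖x‖ ^ (p - 2)) • x - (‖y‖ ^ (p - 2)) • y‖ ≤ (p - 1) * ‖x - y‖) :=
  ⟨fun hp2 => norm_rpow_smul_sub_rpow_smul_le_of_le_two hp hp2 x y,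
    fun hp2 => norm_rpow_smul_sub_rpow_smul_le_of_two_lt hp2 hx hy⟩
end

section
/- Let f, g : R → R with g(0) = 0 and g increasing, and suppose |f'(x1) − f'(x2)| ≤ g(|x1 − x2|) for all x1, x2 ∈ R. If f attains its global minimum at x̂ and g is invertible on the relevant range, then for any x0, f(x0) − f(x̂) ≥ |f'(x0)| · g^{-1}(|f'(x0)|) − ∫_0^{g^{-1}(|f'(x0)|)} g(x) dx. -/
/-!
Move from `x₀` a distance `r` in the direction of descent `-s`, where `s = ±1` and
`s f'(x₀) = |f'(x₀)|`. Along the way the slope of `t ↦ f (x₀ - s t)` is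
`-s f'(x₀ - s t) ≤ g t - |f'(x₀)|` by the modulus of continuity of `f'`, so integrating gives
`f (x₀ - s r) ≤ f x₀ - (|f'(x₀)| r - ∫₀ʳ g)`, and the minimum value lies below this.
-/

open MeasureTheory Set

theorem exists_abs_eq_one_mul_eq_abs (a : ℝ) : ∃ s : ℝ, |s| = 1 ∧ s * a = |a| := by
  rcases le_or_gt 0 a with ha | ha
  · exact ⟨1, abs_one, by rw [one_mul, abs_of_nonneg ha]⟩
  · exact ⟨-1, by simp, by rw [abs_of_neg ha]; ring⟩

theorem neg_mul_le_sub_abs_of_abs_sub_le {f' g : ℝ → ℝ}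
    (hlip : ∀ x₁ x₂ : ℝ, |f' x₁ - f' x₂| ≤ g |x₁ - x₂|) {x₀ s t : ℝ}
    (hs : |s| = 1) (hsf : s * f' x₀ = |f' x₀|) (ht : 0 ≤ t) :
    -s * f' (x₀ - s * t) ≤ g t - |f' x₀| := by
  have hdist : |x₀ - (x₀ - s * t)| = t := by
    rw [sub_sub_cancel, abs_mul, hs, one_mul, abs_of_nonneg ht]
  have hmod : s * (f' x₀ - f' (x₀ - s * t)) ≤ g t :=
    calc s * (f' x₀ - f' (x₀ - s * t)) ≤ |s * (f' x₀ - f' (x₀ - s * t))| := le_abs_self _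
      _ = |f' x₀ - f' (x₀ - s * t)| := by rw [abs_mul, hs, one_mul]
      _ ≤ g t := (hlip x₀ (x₀ - s * t)).trans_eq (by rw [hdist])
  linarith [mul_sub s (f' x₀) (f' (x₀ - s * t))]

theorem exists_le_sub_mul_abs_deriv_sub_integral {f f' g : ℝ → ℝ}
    (hf : ∀ x, HasDerivAt f (f' x) x)
    (hlip : ∀ x₁ x₂ : ℝ, |f' x₁ - f' x₂| ≤ g |x₁ - x₂|)
    (x₀ : ℝ) {r : ℝ} (hr : 0 ≤ r) (hg : IntervalIntegrable g volume 0 r) :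
    ∃ y, f y ≤ f x₀ - (|f' x₀| * r - ∫ t in (0:ℝ)..r, g t) := by
  obtain ⟨s, hs, hsf⟩ := exists_abs_eq_one_mul_eq_abs (f' x₀)
  have hderiv (t : ℝ) : HasDerivAt (fun t ↦ f (x₀ - s * t)) (-s * f' (x₀ - s * t)) t := by
    have hline : HasDerivAt (fun t ↦ x₀ - s * t) (-s) t := by
      simpa using ((hasDerivAt_id t).const_mul s).const_sub x₀
    rw [mul_comm]
    exact (hf (x₀ - s * t)).comp t hline
  have hint : IntegrableOn (fun t ↦ g t - |f' x₀|) (Icc 0 r) :=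
    ((intervalIntegrable_iff_integrableOn_Icc_of_le hr).1 hg).sub (integrableOn_const (by simp))
  have hdescent : f (x₀ - s * r) - f (x₀ - s * 0) ≤ ∫ t in (0:ℝ)..r, (g t - |f' x₀|) :=
    intervalIntegral.sub_le_integral_of_hasDeriv_right_of_le hr
      (fun t _ ↦ (hderiv t).continuousAt.continuousWithinAt)
      (fun t _ ↦ (hderiv t).hasDerivWithinAt) hint
      (fun t ht ↦ neg_mul_le_sub_abs_of_abs_sub_le hlip hs hsf ht.1.le)
  rw [intervalIntegral.integral_sub hg intervalIntegrable_const,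
    intervalIntegral.integral_const, smul_eq_mul, mul_zero, sub_zero, sub_zero] at hdescent
  exact ⟨x₀ - s * r, by linarith⟩

theorem stmt7_general (f f' g : ℝ → ℝ)
    (hf : ∀ x, HasDerivAt f (f' x) x)
    (hgmono : Monotone g)
    (hlip : ∀ x1 x2 : ℝ, |f' x1 - f' x2| ≤ g |x1 - x2|)
    (xhat : ℝ) (hmin : ∀ x, f xhat ≤ f x)
    (x0 : ℝ) (gi : ℝ) (hgi : 0 ≤ gi) :
    f x0 - f xhat ≥ |f' x0| * gi - ∫ x in (0:ℝ)..gi, g x := by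
  obtain ⟨y, hy⟩ :=
    exists_le_sub_mul_abs_deriv_sub_integral hf hlip x0 hgi hgmono.intervalIntegrable
  linarith [hmin y]

theorem stmt7 (f f' g : ℝ → ℝ)
    (hf : ∀ x, HasDerivAt f (f' x) x)
    (hg0 : g 0 = 0) (hgmono : Monotone g)
    (hlip : ∀ x1 x2 : ℝ, |f' x1 - f' x2| ≤ g |x1 - x2|)
    (xhat : ℝ) (hmin : ∀ x, f xhat ≤ f x)
    (x0 : ℝ) (gi : ℝ) (hgi : 0 ≤ gi) (hginv : g gi = |f' x0|) :
    f x0 - f xhat ≥ |f' x0| * gi - ∫ x in (0:ℝ)..gi, g x :=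
  stmt7_general f f' g hf hgmono hlip xhat hmin x0 gi hgi
end

section
/- Let L1 and L̂1 be d-subspaces of R^D with principal angles θ_1 ≥ … ≥ θ_d, principal vectors v_1,…,v_d of L1, and let k be the number of nonzero principal angles. Set γ_i = sin^2(θ_i)/∑_{j=1}^k sin^2(θ_j) and assume WLOG γ_1 ≥ 1/d. Then the set {x ∈ L1 : dist(x, L̂1) < β · dist_G(L1, L̂1)} is contained in {x ∈ L1 : |v_1^T x| < (π√d/2) β}, for every β > 0. -/
/-!
Only the first principal vector matters: `dist(x, L̂₁) ≥ |v₁ᵀx| sin θ₁`. On the other side, Jordan's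
inequality `θ ≤ (π/2) sin θ` gives `dist_G(L₁, L̂₁) ≤ (π/2) √(∑ sin² θⱼ)`, and `γ₁ ≥ 1/d` says
`∑ sin² θⱼ ≤ d sin² θ₁`. Chaining these, `|v₁ᵀx| sin θ₁ < β (π √d / 2) sin θ₁`, and `sin θ₁` cancels.
-/

open Real

theorem Real.le_pi_div_two_mul_sin {x : ℝ} (hx : 0 ≤ x) (hx' : x ≤ π / 2) :
    x ≤ π / 2 * sin x := by
  have h := mul_le_sin hx hx'
  rw [div_mul_eq_mul_div, div_le_iff₀ pi_pos] at h
  linarith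

theorem Real.sqrt_sum_sq_le_pi_div_two_mul_sqrt_sum_sin_sq {ι : Type*} [Fintype ι] (θ : ι → ℝ)
    (hθ : ∀ i, θ i ∈ Set.Icc 0 (π / 2)) :
    √(∑ i, θ i ^ 2) ≤ π / 2 * √(∑ i, sin (θ i) ^ 2) := by
  have hsum : ∑ i, θ i ^ 2 ≤ (π / 2) ^ 2 * ∑ i, sin (θ i) ^ 2 := by
    rw [Finset.mul_sum]
    gcongr with i
    rw [← mul_pow]
    exact pow_le_pow_left₀ (hθ i).1 (le_pi_div_two_mul_sin (hθ i).1 (hθ i).2) 2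
  calc √(∑ i, θ i ^ 2) ≤ √((π / 2) ^ 2 * ∑ i, sin (θ i) ^ 2) := sqrt_le_sqrt hsum
    _ = π / 2 * √(∑ i, sin (θ i) ^ 2) := by
      rw [sqrt_mul (by positivity), sqrt_sq (by positivity)]

theorem Finset.sum_le_mul_of_one_div_le_div {ι : Type*} [Fintype ι] {f : ι → ℝ}
    (hf : ∀ i, 0 ≤ f i) {c : ℝ} (hc : 0 < c) {i : ι} (h : 1 / c ≤ f i / ∑ j, f j) :
    ∑ j, f j ≤ c * f i := by
  rcases (Finset.sum_nonneg fun j _ => hf j).eq_or_lt with hzero | hpos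
  · rw [← hzero]
    exact mul_nonneg hc.le (hf i)
  · rw [div_le_div_iff₀ hc hpos] at h
    linarith

theorem abs_le_sqrt_sum_sq {ι : Type*} [Fintype ι] (f : ι → ℝ) (i : ι) :
    |f i| ≤ √(∑ j, f j ^ 2) :=
  abs_le_sqrt (Finset.single_le_sum (fun j _ => sq_nonneg (f j)) (Finset.mem_univ i))

theorem stmt15_general (D d : ℕ) (hd : 0 < d)
    (L1 Lhat : Submodule ℝ (EuclideanSpace ℝ (Fin D)))
    -- the principal angles between `L1` and `Lhat`
    (θ : Fin d → ℝ) (hθ : ∀ i, θ i ∈ Set.Icc 0 (Real.pi / 2))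
    -- the principal vectors of `L1`, an orthonormal basis of `L1`
    (v : Fin d → EuclideanSpace ℝ (Fin D))
    -- for `x = ∑ xᵢ vᵢ ∈ L1`, `dist(x, Lhat) = sqrt (∑ xᵢ² sin² θᵢ)`
    (hdist : ∀ x ∈ L1,
      Metric.infDist x (Lhat : Set (EuclideanSpace ℝ (Fin D))) =
        Real.sqrt (∑ i, (inner ℝ (v i) x : ℝ) ^ 2 * Real.sin (θ i) ^ 2))
    -- `γ₁ = sin²θ₁ / ∑ⱼ sin²θⱼ ≥ 1/d` (WLOG)
    (hγ : 1 / (d : ℝ) ≤ Real.sin (θ ⟨0, hd⟩) ^ 2 / ∑ j, Real.sin (θ j) ^ 2)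
    (β : ℝ) (hβ : 0 < β) :
    {x : EuclideanSpace ℝ (Fin D) | x ∈ L1 ∧
        Metric.infDist x (Lhat : Set (EuclideanSpace ℝ (Fin D))) <
          β * Real.sqrt (∑ i, θ i ^ 2)} ⊆
      {x : EuclideanSpace ℝ (Fin D) | x ∈ L1 ∧
        |(inner ℝ (v ⟨0, hd⟩) x : ℝ)| < (Real.pi * Real.sqrt d / 2) * β} := by
  rintro x ⟨hxL, hx⟩
  set i₀ : Fin d := ⟨0, hd⟩
  have hsin : 0 ≤ sin (θ i₀) :=
    sin_nonneg_of_nonneg_of_le_pi (hθ i₀).1 ((hθ i₀).2.trans (by linarith [pi_pos]))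
  have hdist_ge : |inner ℝ (v i₀) x| * sin (θ i₀) ≤ Metric.infDist x Lhat := by
    simpa only [hdist x hxL, mul_pow, abs_mul, abs_of_nonneg hsin] using
      abs_le_sqrt_sum_sq (fun i => inner ℝ (v i) x * sin (θ i)) i₀
  have hsum_sin : √(∑ j, sin (θ j) ^ 2) ≤ √d * sin (θ i₀) := by
    rw [← sqrt_sq hsin, ← sqrt_mul (Nat.cast_nonneg d)]
    exact sqrt_le_sqrt (Finset.sum_le_mul_of_one_div_le_div (fun j => sq_nonneg _)
      (Nat.cast_pos.mpr hd) hγ)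
  have hlt : |inner ℝ (v i₀) x| * sin (θ i₀) < (π * √d / 2 * β) * sin (θ i₀) :=
    calc |inner ℝ (v i₀) x| * sin (θ i₀) ≤ Metric.infDist x Lhat := hdist_ge
      _ < β * √(∑ i, θ i ^ 2) := hx
      _ ≤ β * (π / 2 * (√d * sin (θ i₀))) := by
        gcongr
        exact (sqrt_sum_sq_le_pi_div_two_mul_sqrt_sum_sin_sq θ hθ).trans (by gcongr)
      _ = (π * √d / 2 * β) * sin (θ i₀) := by ring
  exact ⟨hxL, lt_of_mul_lt_mul_right hlt hsin⟩

theorem stmt15 (D d : ℕ) (hd : 0 < d)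
    (L1 Lhat : Submodule ℝ (EuclideanSpace ℝ (Fin D)))
    -- the principal angles between `L1` and `Lhat`
    (θ : Fin d → ℝ) (hθ : ∀ i, θ i ∈ Set.Icc 0 (Real.pi / 2))
    -- the principal vectors of `L1`, an orthonormal basis of `L1`
    (v : Fin d → EuclideanSpace ℝ (Fin D)) (hvon : Orthonormal ℝ v)
    (hvspan : Submodule.span ℝ (Set.range v) = L1)
    -- for `x = ∑ xᵢ vᵢ ∈ L1`, `dist(x, Lhat) = sqrt (∑ xᵢ² sin² θᵢ)`
    (hdist : ∀ x ∈ L1,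
      Metric.infDist x (Lhat : Set (EuclideanSpace ℝ (Fin D))) =
        Real.sqrt (∑ i, (inner ℝ (v i) x : ℝ) ^ 2 * Real.sin (θ i) ^ 2))
    -- `γ₁ = sin²θ₁ / ∑ⱼ sin²θⱼ ≥ 1/d` (WLOG)
    (hγ : 1 / (d : ℝ) ≤ Real.sin (θ ⟨0, hd⟩) ^ 2 / ∑ j, Real.sin (θ j) ^ 2)
    (β : ℝ) (hβ : 0 < β) :
    {x : EuclideanSpace ℝ (Fin D) | x ∈ L1 ∧
        Metric.infDist x (Lhat : Set (EuclideanSpace ℝ (Fin D))) <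
          β * Real.sqrt (∑ i, θ i ^ 2)} ⊆
      {x : EuclideanSpace ℝ (Fin D) | x ∈ L1 ∧
        |(inner ℝ (v ⟨0, hd⟩) x : ℝ)| < (Real.pi * Real.sqrt d / 2) * β} :=
  stmt15_general D d hd L1 Lhat θ hθ v hdist hγ β hβ
end
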